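/- Let d ≥ 1, let ρ : ℝ^d → (0,∞) be strictly positive, c ∈ ℝ^d, L ∈ ℝ^{d×d} invertible, Σ := L L^T, α(y) := L y + c, and ρ_α := ρ∘α. Define φ^{(1)}_{m,C}(x; ρ) := ρ(x)/N_d(x; m, C), the superlevel sets L_{m,C}(t; ρ) := {x : φ^{(1)}_{m,C}(x; ρ) > t}, the ellipse parametrization p̃_{x,v,m}(ω) := cos(ω)(x − m) + sin(ω)(v − m) + m, and let p_{x,v,m} be its restriction to [0, 2π). Then for all x, v ∈ ℝ^d, all u > 0, and every Borel set A ⊆ ℝ^d: p_{α^{-1}(x), α^{-1}(v), 0}^{-1}( α^{-1}(A) ∩ L_{0, I_d}(u · φ^{(1)}_{0, I_d}(α^{-1}(x); ρ_α); ρ_α) ) = p_{x, v, c}^{-1}( A ∩ L_{c, Σ}(u · φ^{(1)}_{c, Σ}(x; ρ); ρ) ), as subsets of [0, 2π). -/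

import Mathlib

open MeasureTheory Matrix

/-- The multivariate Gaussian density `N_d(x; m, C)` on `ℝ^d` with mean `m` and
(positive definite) covariance `C`. -/
noncomputable def gaussDensity (d : ℕ) (m : Fin d → ℝ)
    (C : Matrix (Fin d) (Fin d) ℝ) (x : Fin d → ℝ) : ℝ :=
  (2 * Real.pi) ^ (-(d : ℝ) / 2) * C.det ^ (-(1 : ℝ) / 2) *
    Real.exp (-((x - m) ⬝ᵥ C⁻¹.mulVec (x - m)) / 2)

/-- The non-Gaussian factor `φ^{(1)}_{m,C}(x; ρ) = ρ(x) / N_d(x; m, C)` used in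
general purpose elliptical slice sampling. -/
noncomputable def phiOne (d : ℕ) (m : Fin d → ℝ)
    (C : Matrix (Fin d) (Fin d) ℝ) (ρ : (Fin d → ℝ) → ℝ) (x : Fin d → ℝ) : ℝ :=
  ρ x / gaussDensity d m C x

/-- The superlevel set `L_{m,C}(t; ρ) = {x : φ^{(1)}_{m,C}(x; ρ) > t}`. -/
def levelSet (d : ℕ) (m : Fin d → ℝ) (C : Matrix (Fin d) (Fin d) ℝ)
    (ρ : (Fin d → ℝ) → ℝ) (t : ℝ) : Set (Fin d → ℝ) :=
  {x | t < phiOne d m C ρ x}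

/-- The ellipse parametrization
`p̃_{x,v,m}(ω) = cos(ω)(x − m) + sin(ω)(v − m) + m`. -/
noncomputable def ellipsePath {d : ℕ} (x v m : Fin d → ℝ) (ω : ℝ) : Fin d → ℝ :=
  Real.cos ω • (x - m) + Real.sin ω • (v - m) + m

/-- The preimage under the restriction `p_{x,v,m}` of the ellipse parametrization to
the angle interval `[0, 2π)`, viewed as a subset of `[0, 2π) ⊆ ℝ`. -/
noncomputable def ellipsePreimage {d : ℕ} (x v m : Fin d → ℝ)
    (S : Set (Fin d → ℝ)) : Set ℝ :=
  Set.Ico (0 : ℝ) (2 * Real.pi) ∩ (fun ω => ellipsePath x v m ω) ⁻¹' S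

/-! The affine map `α y = L y + c` carries the ellipse through `α⁻¹ x`, `α⁻¹ v` centred at `0`
onto the ellipse through `x`, `v` centred at `c`, angle by angle. Under the same change of
variables `N_d(·; c, L Lᵀ) ∘ α = N_d(·; 0, I) / |det L|`, so `φ^{(1)}` is multiplied by the
constant `|det L| > 0` and superlevel sets correspond once thresholds are rescaled by it. -/

namespace Matrix

variable {n : Type*} [Fintype n] [DecidableEq n]

theorem dotProduct_mul_transpose_inv_mulVec {L : Matrix n n ℝ} (hL : IsUnit L.det)
    (y : n → ℝ) : (L *ᵥ y) ⬝ᵥ (L * Lᵀ)⁻¹ *ᵥ (L *ᵥ y) = y ⬝ᵥ y := by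
  rw [mul_inv_rev, mulVec_mulVec, Matrix.mul_assoc, nonsing_inv_mul L hL, Matrix.mul_one,
    dotProduct_mulVec, ← mulVec_transpose, mulVec_mulVec, ← transpose_nonsing_inv,
    transpose_transpose, nonsing_inv_mul L hL, one_mulVec]

end Matrix

theorem mulVec_ellipsePath_add {d : ℕ} (L : Matrix (Fin d) (Fin d) ℝ) (c x v m : Fin d → ℝ)
    (ω : ℝ) :
    L *ᵥ ellipsePath x v m ω + c = ellipsePath (L *ᵥ x + c) (L *ᵥ v + c) (L *ᵥ m + c) ω := by
  simp only [ellipsePath, mulVec_add, mulVec_smul, mulVec_sub]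
  module

theorem ellipsePreimage_preimage_affine {d : ℕ} (L : Matrix (Fin d) (Fin d) ℝ)
    (c x v m : Fin d → ℝ) (T : Set (Fin d → ℝ)) :
    ellipsePreimage x v m ((fun y => L *ᵥ y + c) ⁻¹' T) =
      ellipsePreimage (L *ᵥ x + c) (L *ᵥ v + c) (L *ᵥ m + c) T := by
  ext ω
  simp only [ellipsePreimage, Set.mem_inter_iff, Set.mem_preimage, mulVec_ellipsePath_add]

theorem gaussDensity_pos {d : ℕ} {C : Matrix (Fin d) (Fin d) ℝ} (hC : 0 < C.det)
    (m x : Fin d → ℝ) : 0 < gaussDensity d m C x := by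
  unfold gaussDensity
  have := Real.pi_pos
  positivity

theorem gaussDensity_affine {d : ℕ} {L : Matrix (Fin d) (Fin d) ℝ} (hL : IsUnit L.det)
    (c y : Fin d → ℝ) :
    gaussDensity d c (L * Lᵀ) (L *ᵥ y + c) = gaussDensity d 0 1 y / |L.det| := by
  have hdet : (L * Lᵀ).det ^ (-(1 : ℝ) / 2) = |L.det|⁻¹ := by
    have hpos : 0 < |L.det| := abs_pos.mpr hL.ne_zero
    rw [det_mul, det_transpose, ← abs_mul_abs_self, Real.mul_rpow hpos.le hpos.le,
      ← Real.rpow_add hpos]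
    norm_num [Real.rpow_neg_one]
  simp only [gaussDensity, add_sub_cancel_right, dotProduct_mul_transpose_inv_mulVec hL,
    hdet, det_one, Real.one_rpow, inv_one, one_mulVec, sub_zero]
  ring

theorem phiOne_affine {d : ℕ} {L : Matrix (Fin d) (Fin d) ℝ} (hL : IsUnit L.det)
    (c : Fin d → ℝ) (ρ : (Fin d → ℝ) → ℝ) (y : Fin d → ℝ) :
    phiOne d c (L * Lᵀ) ρ (L *ᵥ y + c) =
      |L.det| * phiOne d 0 1 (fun y => ρ (L *ᵥ y + c)) y := by
  have := (gaussDensity_pos (C := 1) (by simp) 0 y).ne'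
  simp only [phiOne, gaussDensity_affine hL]
  field_simp

theorem preimage_levelSet_affine {d : ℕ} {L : Matrix (Fin d) (Fin d) ℝ} (hL : IsUnit L.det)
    (c : Fin d → ℝ) (ρ : (Fin d → ℝ) → ℝ) (t : ℝ) :
    (fun y => L *ᵥ y + c) ⁻¹' levelSet d c (L * Lᵀ) ρ (|L.det| * t) =
      levelSet d 0 1 (fun y => ρ (L *ᵥ y + c)) t := by
  ext y
  simp only [levelSet, Set.mem_preimage, Set.mem_ofPred_eq, phiOne_affine hL]
  exact mul_lt_mul_iff_right₀ (abs_pos.mpr hL.ne_zero)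

theorem ellipsePreimage_affine_transform_general
    (d : ℕ)
    (ρ : (Fin d → ℝ) → ℝ)
    (c : Fin d → ℝ) (L : Matrix (Fin d) (Fin d) ℝ) (hL : IsUnit L.det)
    (S : Matrix (Fin d) (Fin d) ℝ) (hS : S = L * Lᵀ)
    (x v : Fin d → ℝ) (u : ℝ)
    (A : Set (Fin d → ℝ)) :
    ellipsePreimage (L⁻¹.mulVec (x - c)) (L⁻¹.mulVec (v - c)) 0
        (((fun y => L.mulVec y + c) ⁻¹' A) ∩
          levelSet d 0 1 (fun y => ρ (L.mulVec y + c))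
            (u * phiOne d 0 1 (fun y => ρ (L.mulVec y + c))
              (L⁻¹.mulVec (x - c)))) =
      ellipsePreimage x v c
        (A ∩ levelSet d c S ρ (u * phiOne d c S ρ x)) := by
  subst hS
  have hα : ∀ z, L *ᵥ L⁻¹ *ᵥ (z - c) + c = z := fun z => by
    rw [mulVec_mulVec, mul_nonsing_inv L hL, one_mulVec, sub_add_cancel]
  have hthreshold : u * phiOne d c (L * Lᵀ) ρ x =
      |L.det| * (u * phiOne d 0 1 (fun y => ρ (L *ᵥ y + c)) (L⁻¹ *ᵥ (x - c))) := by
    conv_lhs => rw [← hα x, phiOne_affine hL]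
    ring
  rw [hthreshold, ← preimage_levelSet_affine hL, ← Set.preimage_inter,
    ellipsePreimage_preimage_affine, hα, hα, mulVec_zero, zero_add]

/-- the angle-preimage identity for GP-ESS under the affine
transformation `α(y) = L y + c` with `Σ = L Lᵀ`:
`p_{α⁻¹(x),α⁻¹(v),0}⁻¹(α⁻¹(A) ∩ L_{0,I}(u·φ^{(1)}_{0,I}(α⁻¹(x); ρ∘α); ρ∘α))
  = p_{x,v,c}⁻¹(A ∩ L_{c,Σ}(u·φ^{(1)}_{c,Σ}(x; ρ); ρ))` as subsets of `[0, 2π)`. -/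
theorem ellipsePreimage_affine_transform
    (d : ℕ) (hd : 1 ≤ d)
    (ρ : (Fin d → ℝ) → ℝ) (hρ_pos : ∀ x, 0 < ρ x)
    (c : Fin d → ℝ) (L : Matrix (Fin d) (Fin d) ℝ) (hL : IsUnit L.det)
    (S : Matrix (Fin d) (Fin d) ℝ) (hS : S = L * Lᵀ)
    (x v : Fin d → ℝ) (u : ℝ) (hu : 0 < u)
    (A : Set (Fin d → ℝ)) (hA : MeasurableSet A) :
    ellipsePreimage (L⁻¹.mulVec (x - c)) (L⁻¹.mulVec (v - c)) 0
        (((fun y => L.mulVec y + c) ⁻¹' A) ∩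
          levelSet d 0 1 (fun y => ρ (L.mulVec y + c))
            (u * phiOne d 0 1 (fun y => ρ (L.mulVec y + c))
              (L⁻¹.mulVec (x - c)))) =
      ellipsePreimage x v c
        (A ∩ levelSet d c S ρ (u * phiOne d c S ρ x)) :=
  ellipsePreimage_affine_transform_general d ρ c L hL S hS x v u A
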